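/- arXiv:2008.08559 — 2 statements merged into one kernel-verified Lean document; each statement's English description precedes it below -/
import Mathlib

section
/- Let A be an effect, t ∈ (0,1], and P a rank-one projection on a Hilbert space H. Then A is coexistent with tP if and only if t ≤ Λ(A,P) + Λ(I-A,P), where Λ(B,P) = sup{λ ≥ 0 : λP ≤ B} is the strength function. -/
noncomputable section

/-- An effect on a complex Hilbert space: a positive operator below the identity. -/
def IsEffect {H : Type*} [NormedAddCommGroup H] [InnerProductSpace ℂ H] [CompleteSpace H]
    (A : H →L[ℂ] H) : Prop :=
  A.IsPositive ∧ ((1 : H →L[ℂ] H) - A).IsPositive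

/-- Effects `A`, `B` are coexistent: there are effects `M ≤ A`, `N ≤ I - A` with `M + N = B`. -/
def Coexistent {H : Type*} [NormedAddCommGroup H] [InnerProductSpace ℂ H] [CompleteSpace H]
    (A B : H →L[ℂ] H) : Prop :=
  ∃ M N : H →L[ℂ] H, IsEffect M ∧ IsEffect N ∧
    (A - M).IsPositive ∧ (((1 : H →L[ℂ] H) - A) - N).IsPositive ∧ M + N = B

/-- A rank-one orthogonal projection. -/
def IsRankOneProjection {H : Type*} [NormedAddCommGroup H] [InnerProductSpace ℂ H]
    [CompleteSpace H] (P : H →L[ℂ] H) : Prop :=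
  IsSelfAdjoint P ∧ P ∘L P = P ∧ Module.finrank ℂ (LinearMap.range (P : H →ₗ[ℂ] H)) = 1

/-- The strength function `Λ(B,P) = sup {λ ≥ 0 : λP ≤ B}`. -/
def strength {H : Type*} [NormedAddCommGroup H] [InnerProductSpace ℂ H] [CompleteSpace H]
    (B P : H →L[ℂ] H) : ℝ :=
  sSup {l : ℝ | 0 ≤ l ∧ (B - (l : ℂ) • P).IsPositive}

abbrev E2 := EuclideanSpace ℂ (Fin 2)

/-!
Write `P = |e⟩⟨e|` with `‖e‖ = 1`. A positive `M` with `M ≤ c P` has vanishing quadratic form on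
`e⊥`, hence (via `√M`) vanishes on `e⊥`, so `M = P M P = μ P` with `μ ≥ 0`. Thus a decomposition
`M + N = t P` with `M ≤ A`, `N ≤ I - A` consists of multiples `μ P`, `ν P` with `μ + ν = t`.
Since the supremum defining `Λ(B, P)` is attained, `μ P ≤ B ↔ μ ≤ Λ(B, P)` for `μ ≥ 0`, and
both directions follow: conversely take `μ = min t Λ(A, P)` and `ν = t - μ`.
-/

open ContinuousLinearMap InnerProductSpace RCLike

theorem Submodule.exists_eq_span_singleton_of_finrank_eq_one {𝕜 E : Type*} [RCLike 𝕜]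
    [NormedAddCommGroup E] [NormedSpace 𝕜 E] {K : Submodule 𝕜 E}
    (hK : Module.finrank 𝕜 K = 1) : ∃ e : E, ‖e‖ = 1 ∧ K = 𝕜 ∙ e := by
  obtain ⟨⟨v, hvK⟩, hv0, hspan⟩ := finrank_eq_one_iff'.mp hK
  have hv0 : v ≠ 0 := by simpa using hv0
  refine ⟨(‖v‖⁻¹ : 𝕜) • v, by simp [norm_smul, hv0], ?_⟩
  rw [Submodule.span_singleton_smul_eq (by simpa using hv0)]
  refine le_antisymm (fun w hw => ?_) ((Submodule.span_singleton_le_iff_mem _ _).mpr hvK)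
  obtain ⟨c, hc⟩ := hspan ⟨w, hw⟩
  exact Submodule.mem_span_singleton.mpr ⟨c, congrArg Subtype.val hc⟩

namespace ContinuousLinearMap

variable {H : Type*} [NormedAddCommGroup H] [InnerProductSpace ℂ H]

theorem ofReal_smul_mono {P : H →L[ℂ] H} (hP : 0 ≤ P) {a b : ℝ} (hab : a ≤ b) :
    (a : ℂ) • P ≤ (b : ℂ) • P := by
  rw [le_def, ← sub_smul, ← Complex.ofReal_sub]
  exact ((nonneg_iff_isPositive P).mp hP).smul_of_nonneg
    (Complex.zero_le_real.mpr (sub_nonneg.mpr hab))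

theorem ofReal_smul_nonneg {P : H →L[ℂ] H} (hP : 0 ≤ P) {l : ℝ} (hl : 0 ≤ l) :
    0 ≤ (l : ℂ) • P := by
  simpa using ofReal_smul_mono hP hl

variable [CompleteSpace H]

theorem apply_eq_zero_of_re_inner_eq_zero {T : H →L[ℂ] H} (hT : 0 ≤ T) {x : H}
    (hx : re ⟪T x, x⟫_ℂ = 0) : T x = 0 := by
  have hS := (nonneg_iff_isPositive _).mp (CFC.sqrt_nonneg T)
  have hTS : T x = CFC.sqrt T (CFC.sqrt T x) := by
    rw [← comp_apply, ← mul_def, CFC.sqrt_mul_sqrt_self T]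
  have hSx : CFC.sqrt T x = 0 := by
    rwa [hTS, hS.inner_left_eq_inner_right, inner_self_eq_norm_sq, sq_eq_zero_iff,
      norm_eq_zero] at hx
  rw [hTS, hSx, map_zero]

theorem ofReal_smul_le_iff {B P : H →L[ℂ] H} (hB : IsSelfAdjoint B) (hP : IsSelfAdjoint P)
    (l : ℝ) : (l : ℂ) • P ≤ B ↔ ∀ x, l * re ⟪P x, x⟫_ℂ ≤ re ⟪B x, x⟫_ℂ := by
  have hsa : IsSelfAdjoint (B - (l : ℂ) • P) := hB.sub (.smul (Complex.conj_ofReal l) hP)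
  simp only [le_def, isPositive_def', hsa, true_and, reApplyInnerSelf_apply, sub_apply,
    smul_apply, inner_sub_left, inner_smul_left, map_sub, Complex.conj_ofReal, sub_nonneg]
  simp

theorem exists_eq_ofReal_smul_rankOne_of_le {M : H →L[ℂ] H} {e : H} (he : ‖e‖ = 1) {c : ℂ}
    (hM : 0 ≤ M) (h : M ≤ c • rankOne ℂ e e) :
    ∃ μ : ℝ, 0 ≤ μ ∧ M = (μ : ℂ) • rankOne ℂ e e := by
  have hMpos := (nonneg_iff_isPositive M).mp hM
  have hker : ∀ x, ⟪e, x⟫_ℂ = 0 → M x = 0 := fun x hx => by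
    refine apply_eq_zero_of_re_inner_eq_zero hM (le_antisymm ?_ (hMpos.re_inner_nonneg_left x))
    simpa [hx, inner_sub_left] using h.re_inner_nonneg_left x
  have hMR : M ∘L rankOne ℂ e e = M := ext fun x => by
    rw [comp_apply, rankOne_apply, ← sub_eq_zero, ← map_sub]
    exact hker _ (by simp [he])
  have hRM : rankOne ℂ e e ∘L M = M := by
    simpa only [adjoint_comp, adjoint_rankOne, (IsSelfAdjoint.of_nonneg hM).adjoint_eq]
      using congrArg adjoint hMR
  obtain ⟨μ, hμ, hμM⟩ := RCLike.nonneg_iff_exists_ofReal.mp (hMpos.inner_nonneg_right e)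
  refine ⟨μ, hμ, ?_⟩
  calc M = rankOne ℂ e e ∘L (M ∘L rankOne ℂ e e) := by rw [hMR, hRM]
    _ = (μ : ℂ) • rankOne ℂ e e := by rw [comp_rankOne, rankOne_comp_rankOne, ← hμM]; rfl

end ContinuousLinearMap

section Effects

variable {H : Type*} [NormedAddCommGroup H] [InnerProductSpace ℂ H] [CompleteSpace H]

theorem IsRankOneProjection.exists_eq_rankOne {P : H →L[ℂ] H} (hP : IsRankOneProjection P) :
    ∃ e : H, ‖e‖ = 1 ∧ P = rankOne ℂ e e := by
  obtain ⟨hsa, hidem, hrank⟩ := hP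
  obtain ⟨K, _, rfl⟩ := isStarProjection_iff_eq_starProjection.mp ⟨hidem, hsa⟩
  obtain ⟨e, he, rfl⟩ := Submodule.exists_eq_span_singleton_of_finrank_eq_one (K := K)
    (by rwa [K.range_starProjection] at hrank)
  exact ⟨e, he, ext fun x => Submodule.starProjection_unit_singleton ℂ he x⟩

theorem IsEffect.coexistent_iff {A B : H →L[ℂ] H} (hA : IsEffect A) :
    Coexistent A B ↔ ∃ M N : H →L[ℂ] H,
      0 ≤ M ∧ 0 ≤ N ∧ M ≤ A ∧ N ≤ 1 - A ∧ M + N = B := by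
  have hA0 : 0 ≤ A := (nonneg_iff_isPositive A).mpr hA.1
  have hA1 : A ≤ 1 := hA.2
  constructor
  · rintro ⟨M, N, hM, hN, hMA, hNA, hMN⟩
    exact ⟨M, N, (nonneg_iff_isPositive M).mpr hM.1, (nonneg_iff_isPositive N).mpr hN.1,
      hMA, hNA, hMN⟩
  · rintro ⟨M, N, hM, hN, hMA, hNA, hMN⟩
    refine ⟨M, N, ⟨(nonneg_iff_isPositive M).mp hM, ?_⟩, ⟨(nonneg_iff_isPositive N).mp hN, ?_⟩,
      hMA, hNA, hMN⟩
    · exact hMA.trans hA1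
    · exact hNA.trans (sub_le_self 1 hA0)

theorem strength_nonneg (B P : H →L[ℂ] H) : 0 ≤ strength B P :=
  Real.sSup_nonneg fun _ hl => hl.1

theorem strength_smul_le {B P : H →L[ℂ] H} (hB : 0 ≤ B) (hP : 0 ≤ P) :
    (strength B P : ℂ) • P ≤ B := by
  have hBsa := IsSelfAdjoint.of_nonneg hB
  have hPsa := IsSelfAdjoint.of_nonneg hP
  rw [ofReal_smul_le_iff hBsa hPsa]
  intro x
  rcases (((nonneg_iff_isPositive P).mp hP).re_inner_nonneg_left x).eq_or_lt with hPx | hPx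
  · rw [← hPx, mul_zero]
    exact ((nonneg_iff_isPositive B).mp hB).re_inner_nonneg_left x
  · rw [← le_div_iff₀ hPx]
    refine csSup_le ⟨0, le_rfl, by simpa using (nonneg_iff_isPositive B).mp hB⟩ fun l hl => ?_
    rw [le_div_iff₀ hPx]
    exact (ofReal_smul_le_iff hBsa hPsa l).mp hl.2 x

theorem le_strength_of_smul_le {B P : H →L[ℂ] H} (hB : IsSelfAdjoint B) (hP : IsSelfAdjoint P)
    {x : H} (hx : 0 < re ⟪P x, x⟫_ℂ) {l : ℝ} (hl : 0 ≤ l) (h : (l : ℂ) • P ≤ B) :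
    l ≤ strength B P := by
  refine le_csSup ⟨re ⟪B x, x⟫_ℂ / re ⟪P x, x⟫_ℂ, fun m hm => ?_⟩ ⟨hl, h⟩
  rw [le_div_iff₀ hx]
  exact (ofReal_smul_le_iff hB hP m).mp hm.2 x

theorem ofReal_smul_le_iff_le_strength {B P : H →L[ℂ] H} (hB : 0 ≤ B) (hP : 0 ≤ P)
    {x : H} (hx : 0 < re ⟪P x, x⟫_ℂ) {l : ℝ} (hl : 0 ≤ l) :
    (l : ℂ) • P ≤ B ↔ l ≤ strength B P :=
  ⟨le_strength_of_smul_le (.of_nonneg hB) (.of_nonneg hP) hx hl,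
    fun h => (ofReal_smul_mono hP h).trans (strength_smul_le hB hP)⟩

end Effects

theorem coexistent_rank_one_iff_strength {H : Type*} [NormedAddCommGroup H]
    [InnerProductSpace ℂ H] [CompleteSpace H] (A P : H →L[ℂ] H)
    (hA : IsEffect A) (hP : IsRankOneProjection P)
    (t : ℝ) (ht : t ∈ Set.Ioc (0 : ℝ) 1) :
    Coexistent A ((t : ℂ) • P) ↔
      t ≤ strength A P + strength ((1 : H →L[ℂ] H) - A) P := by
  obtain ⟨e, he, rfl⟩ := hP.exists_eq_rankOne
  have hR : 0 ≤ rankOne ℂ e e := (nonneg_iff_isPositive _).mpr (isPositive_rankOne_self e)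
  have hRe : 0 < re ⟪rankOne ℂ e e e, e⟫_ℂ := by simp [he]
  have hA0 : 0 ≤ A := (nonneg_iff_isPositive A).mpr hA.1
  have hA1 : 0 ≤ 1 - A := (nonneg_iff_isPositive _).mpr hA.2
  have hle {B : H →L[ℂ] H} (hB : 0 ≤ B) {l : ℝ} (hl : 0 ≤ l) :=
    ofReal_smul_le_iff_le_strength hB hR hRe hl
  rw [hA.coexistent_iff]
  constructor
  · rintro ⟨M, N, hM, hN, hMA, hNA, hMN⟩
    obtain ⟨μ, hμ, rfl⟩ :=
      exists_eq_ofReal_smul_rankOne_of_le he hM (hMN ▸ le_add_of_nonneg_right hN)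
    obtain ⟨ν, hν, rfl⟩ :=
      exists_eq_ofReal_smul_rankOne_of_le he hN (hMN ▸ le_add_of_nonneg_left hM)
    have he0 : e ≠ 0 := norm_ne_zero_iff.mp (by simp [he])
    have hsum : ((μ + ν : ℝ) : ℂ) = t :=
      smul_left_injective ℂ (rankOne_ne_zero (𝕜 := ℂ) he0 he0) (by push_cast; rwa [add_smul])
    linarith [(hle hA0 hμ).mp hMA, (hle hA1 hν).mp hNA, Complex.ofReal_inj.mp hsum]
  · intro h
    set s := min t (strength A (rankOne ℂ e e))
    have hs0 : 0 ≤ s := le_min ht.1.le (strength_nonneg _ _)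
    have hst : 0 ≤ t - s := sub_nonneg.mpr (min_le_left _ _)
    refine ⟨(s : ℂ) • rankOne ℂ e e, ((t - s : ℝ) : ℂ) • rankOne ℂ e e,
      ofReal_smul_nonneg hR hs0, ofReal_smul_nonneg hR hst,
      (hle hA0 hs0).mpr (min_le_right _ _), (hle hA1 hst).mpr ?_, ?_⟩
    · rcases min_cases t (strength A (rankOne ℂ e e)) with ⟨hmin, -⟩ | ⟨hmin, -⟩ <;>
        linarith [strength_nonneg (1 - A) (rankOne ℂ e e)]
    · rw [← add_smul, ← Complex.ofReal_add, add_sub_cancel]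
end
end

section
/- Let A be an effect on ℂ² with spectral decomposition A = λ₁P + λ₂(I-P) where P is a rank-one projection and 1 > λ₁ > λ₂ > 0. Then both λ₁P and (1-λ₂)(I-P) have the property that every effect coexistent with them is coexistent with A; that is, (λ₁P)^∼ ⊆ A^∼ and ((1-λ₂)(I-P))^∼ ⊆ A^∼. -/
/-!
Since `A = λ₂ I + (λ₁ - λ₂) P`, an effect `C` coexistent with `λ₁ P` is split as
`C = (c P + λ₂ C) + ((1 - λ₂) C - c P)`. A positive operator below a multiple of the rank-one
projection `P` is itself a multiple `μ P`, so `C = μ P + N` with `0 ≤ μ ≤ λ₁` and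
`N ≤ I - λ₁ P`; in these terms the four inequalities making the split a witness of
coexistence with `A` are nonnegative combinations of `P`, `N` and `I - λ₁ P - N`, and they hold
for `c = max 0 ((1 - λ₂) μ - λ₂ (1 - λ₁))`. The second inclusion is the first one for
`I - A = (1 - λ₂)(I - P) + (1 - λ₁) P`, as `X` and `I - X` have the same coexistent effects and
`I - P` is again a rank-one projection on `ℂ²`.
-/

noncomputable section

open ContinuousLinearMap ComplexOrder

namespace ContinuousLinearMap

lemma exists_mul_mul_eq_smul_of_finrank_range_eq_one {K E : Type*} [Field K]
    [TopologicalSpace E] [AddCommGroup E] [Module K E] [ContinuousConstSMul K E] {P : E →L[K] E}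
    (hrank : Module.finrank K (LinearMap.range (P : E →ₗ[K] E)) = 1) (T : E →L[K] E) :
    ∃ d : K, P * T * P = d • P := by
  obtain ⟨⟨v, u, rfl⟩, -, hspan⟩ := finrank_eq_one_iff'.mp hrank
  have hmul (x : E) : ∃ c : K, P x = c • P u := by
    obtain ⟨c, hc⟩ := hspan ⟨P x, x, rfl⟩
    exact ⟨c, (congrArg Subtype.val hc).symm⟩
  obtain ⟨d, hd⟩ := hmul (T (P u))
  refine ⟨d, ext fun x => ?_⟩
  obtain ⟨c, hc⟩ := hmul x
  change P (T (P x)) = d • P x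
  rw [hc, map_smul, map_smul, hd, smul_comm]

lemma IsPositive.isPositive_smul_iff {𝕜 E : Type*} [RCLike 𝕜] [NormedAddCommGroup E]
    [InnerProductSpace 𝕜 E] {T : E →L[𝕜] E} (hT : T.IsPositive) (hT0 : T ≠ 0) {d : 𝕜} :
    (d • T).IsPositive ↔ 0 ≤ d := by
  rw [← isPositive_toLinearMap_iff, toLinearMap_smul]
  exact hT.toLinearMap.isPositive_smul_iff (coe_injective.ne hT0)

end ContinuousLinearMap

variable {H : Type*} [NormedAddCommGroup H] [InnerProductSpace ℂ H]

lemma isPositive_ofReal_smul_add_ofReal_smul {X Y : H →L[ℂ] H} (hX : X.IsPositive)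
    (hY : Y.IsPositive) {a b : ℝ} (ha : 0 ≤ a) (hb : 0 ≤ b) :
    ((a : ℂ) • X + (b : ℂ) • Y).IsPositive :=
  (hX.smul_of_nonneg (Complex.zero_le_real.mpr ha)).add
    (hY.smul_of_nonneg (Complex.zero_le_real.mpr hb))

variable [CompleteSpace H]

lemma IsStarProjection.isEffect_ofReal_smul_add_ofReal_smul_one_sub {P : H →L[ℂ] H}
    (hP : IsStarProjection P) {a b : ℝ} (ha₀ : 0 ≤ a) (ha₁ : a ≤ 1) (hb₀ : 0 ≤ b) (hb₁ : b ≤ 1) :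
    IsEffect ((a : ℂ) • P + (b : ℂ) • (1 - P)) := by
  have hP₀ := IsPositive.of_isStarProjection hP
  have hQ₀ := IsPositive.of_isStarProjection hP.one_sub
  refine ⟨isPositive_ofReal_smul_add_ofReal_smul hP₀ hQ₀ ha₀ hb₀, ?_⟩
  convert isPositive_ofReal_smul_add_ofReal_smul hP₀ hQ₀ (sub_nonneg.mpr ha₁)
    (sub_nonneg.mpr hb₁) using 1
  push_cast
  module

lemma IsEffect.coexistent_add {X M N : H →L[ℂ] H} (hX : IsEffect X) (hM : M.IsPositive)
    (hN : N.IsPositive) (hMX : (X - M).IsPositive) (hNX : ((1 - X) - N).IsPositive) :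
    Coexistent X (M + N) := by
  refine ⟨M, N, ⟨hM, ?_⟩, ⟨hN, ?_⟩, hMX, hNX, rfl⟩
  · simpa using hMX.add hX.2
  · rw [show 1 - N = (1 - X - N) + X by abel]
    exact hNX.add hX.1

lemma Coexistent.one_sub {X C : H →L[ℂ] H} (h : Coexistent X C) : Coexistent (1 - X) C := by
  obtain ⟨M, N, hM, hN, hMX, hNX, rfl⟩ := h
  exact ⟨N, M, hN, hM, hNX, by rwa [sub_sub_cancel], add_comm N M⟩

lemma IsStarProjection.exists_eq_smul_of_le {P M : H →L[ℂ] H} (hP : IsStarProjection P)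
    (hrank : Module.finrank ℂ (LinearMap.range (P : H →ₗ[ℂ] H)) = 1) (hM : 0 ≤ M)
    (hMP : M ≤ P) : ∃ d : ℂ, M = d • P := by
  obtain ⟨d, hd⟩ := exists_mul_mul_eq_smul_of_finrank_range_eq_one hrank M
  exact ⟨d, (hP.conjugate_of_nonneg_of_le hM hMP).symm.trans hd⟩

lemma IsStarProjection.exists_eq_ofReal_smul_of_le_smul {P M : H →L[ℂ] H}
    (hP : IsStarProjection P) (hrank : Module.finrank ℂ (LinearMap.range (P : H →ₗ[ℂ] H)) = 1)
    {t : ℝ} (ht : t ≤ 1) (hM : M.IsPositive) (hMP : ((t : ℂ) • P - M).IsPositive) :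
    ∃ μ : ℝ, 0 ≤ μ ∧ μ ≤ t ∧ M = (μ : ℂ) • P := by
  have hP₀ := IsPositive.of_isStarProjection hP
  have hP_ne : P ≠ 0 := by
    rintro rfl
    rw [toLinearMap_zero, LinearMap.range_zero, finrank_bot] at hrank
    exact zero_ne_one hrank
  have hM_le : M ≤ P := by
    rw [le_def]
    convert isPositive_ofReal_smul_add_ofReal_smul hMP hP₀ zero_le_one (sub_nonneg.mpr ht) using 1
    push_cast
    module
  obtain ⟨d, rfl⟩ := hP.exists_eq_smul_of_le hrank ((nonneg_iff_isPositive M).mpr hM) hM_le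
  have hd₀ : 0 ≤ d := (hP₀.isPositive_smul_iff hP_ne).mp hM
  have hd_le : d ≤ t := by
    rw [← sub_smul, hP₀.isPositive_smul_iff hP_ne] at hMP
    exact sub_nonneg.mp hMP
  have hd : d = (d.re : ℂ) := Complex.eq_re_of_ofReal_le (r := 0) (by simpa using hd₀)
  rw [hd] at hd₀ hd_le ⊢
  exact ⟨d.re, Complex.zero_le_real.mp hd₀, Complex.real_le_real.mp hd_le, rfl⟩

lemma Coexistent.ofReal_smul_add_ofReal_smul_one_sub {P C : H →L[ℂ] H} (hP : IsStarProjection P)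
    (hrank : Module.finrank ℂ (LinearMap.range (P : H →ₗ[ℂ] H)) = 1) {l₁ l₂ : ℝ} (hl₂ : 0 ≤ l₂)
    (hl₂₁ : l₂ ≤ l₁) (hl₁ : l₁ ≤ 1) (h : Coexistent ((l₁ : ℂ) • P) C) :
    Coexistent ((l₁ : ℂ) • P + (l₂ : ℂ) • (1 - P)) C := by
  obtain ⟨M, N, hM, hN, hMP, hNP, rfl⟩ := h
  obtain ⟨μ, hμ₀, hμl₁, rfl⟩ := hP.exists_eq_ofReal_smul_of_le_smul hrank hl₁ hM.1 hMP
  have hP₀ := IsPositive.of_isStarProjection hP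
  set c := max 0 ((1 - l₂) * μ - l₂ * (1 - l₁))
  have hc₀ : 0 ≤ c := le_max_left _ _
  have hc : (1 - l₂) * μ - l₂ * (1 - l₁) ≤ c := le_max_right _ _
  have hc₁ : c ≤ (1 - l₂) * μ := max_le (by nlinarith) (by nlinarith)
  have hc₂ : c ≤ l₁ - l₂ + l₂ * (l₁ - μ) := max_le (by nlinarith) (by nlinarith)
  convert (hP.isEffect_ofReal_smul_add_ofReal_smul_one_sub (hl₂.trans hl₂₁) hl₁ hl₂
    (hl₂₁.trans hl₁)).coexistent_add (M := (c : ℂ) • P + (l₂ : ℂ) • ((μ : ℂ) • P + N))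
    (N := ((1 - l₂ : ℝ) : ℂ) • ((μ : ℂ) • P + N) - (c : ℂ) • P) ?_ ?_ ?_ ?_ using 1
  · module
  · convert isPositive_ofReal_smul_add_ofReal_smul hP₀ hN.1 (add_nonneg hc₀ (mul_nonneg hl₂ hμ₀))
      hl₂ using 1
    push_cast
    module
  · convert isPositive_ofReal_smul_add_ofReal_smul hP₀ hN.1 (sub_nonneg.mpr hc₁)
      (sub_nonneg.mpr (hl₂₁.trans hl₁)) using 1
    push_cast
    module
  · convert isPositive_ofReal_smul_add_ofReal_smul hNP hP₀ hl₂ (sub_nonneg.mpr hc₂)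
      using 1
    push_cast
    module
  · convert isPositive_ofReal_smul_add_ofReal_smul hNP hP₀ (sub_nonneg.mpr (hl₂₁.trans hl₁))
      (sub_nonneg.mpr hc) using 1
    push_cast
    module

lemma IsRankOneProjection.isStarProjection {P : H →L[ℂ] H} (hP : IsRankOneProjection P) :
    IsStarProjection P :=
  ⟨hP.2.1, hP.1⟩

lemma IsRankOneProjection.one_sub [FiniteDimensional ℂ H] (hH : Module.finrank ℂ H = 2)
    {P : H →L[ℂ] H} (hP : IsRankOneProjection P) : IsRankOneProjection (1 - P) := by
  have hQ := hP.isStarProjection.one_sub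
  refine ⟨hQ.isSelfAdjoint, hQ.isIdempotentElem, ?_⟩
  have := LinearMap.finrank_range_add_finrank_ker (P : H →ₗ[ℂ] H)
  rw [LinearMap.IsIdempotentElem.ker_eq_range_one_sub
    hP.isStarProjection.isIdempotentElem.toLinearMap, hP.2.2] at this
  rw [toLinearMap_sub, toLinearMap_one]
  omega

theorem coexistent_subsets_for_spectral_parts (P : E2 →L[ℂ] E2)
    (hP : IsRankOneProjection P) (l1 l2 : ℝ)
    (hl2 : 0 < l2) (hl21 : l2 < l1) (hl1 : l1 < 1)
    (A : E2 →L[ℂ] E2) (hA : A = (l1 : ℂ) • P + (l2 : ℂ) • ((1 : E2 →L[ℂ] E2) - P)) :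
    (∀ C : E2 →L[ℂ] E2, IsEffect C → Coexistent ((l1 : ℂ) • P) C → Coexistent A C) ∧
    (∀ C : E2 →L[ℂ] E2, IsEffect C →
      Coexistent (((1 - l2 : ℝ) : ℂ) • ((1 : E2 →L[ℂ] E2) - P)) C → Coexistent A C) := by
  have hQ : IsRankOneProjection (1 - P) := hP.one_sub finrank_euclideanSpace_fin
  subst hA
  refine ⟨fun C _ h => ?_, fun C _ h => ?_⟩
  · exact h.ofReal_smul_add_ofReal_smul_one_sub hP.isStarProjection hP.2.2 hl2.le hl21.le hl1.le
  · have h' := h.ofReal_smul_add_ofReal_smul_one_sub hQ.isStarProjection hQ.2.2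
      (l₂ := 1 - l1) (by linarith) (by linarith) (by linarith)
    convert h'.one_sub using 1
    push_cast
    module
end
end
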